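/- If an honest validator holds both a propose-lock PLock(B, l) and a vote-lock VLock(B', l) at the same height l, where B and B' share the same parent block (hence are comparable by round number), then B = B'. -/
import Mathlib

/-- If an honest validator holds both a propose-lock on B and a vote-lock on B'
at the same height, where B and B' share the same parent (hence are comparable
by round number), then B = B'.  Locks are only acquired upon certificates, and a
certificate for a strictly larger sibling block releases/updates the lock. -/
theorem stmt8 {Block : Type*} (parent : Block → Block) (round : Block → ℕ)
    (Cert PLock VLock : Block → Prop) (B B' : Block)
    (hpar : parent B = parent B')
    (hPL : PLock B) (hVL : VLock B')
    (hPcert : PLock B → Cert B) (hVcert : VLock B' → Cert B')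
    (hdistinct : B ≠ B' → round B ≠ round B')
    (hPunlock : ∀ B'', Cert B'' → parent B'' = parent B → round B < round B'' → ¬ PLock B)
    (hVunlock : ∀ B'', Cert B'' → parent B'' = parent B' → round B' < round B'' → ¬ VLock B') :
    B = B' := by
  by_contra hne
  rcases lt_or_gt_of_ne (hdistinct hne) with h | h
  · exact hPunlock B' (hVcert hVL) hpar.symm h hPL
  · exact hVunlock B (hPcert hPL) hpar h hVL
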